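/- arXiv:1705.09540 — 2 statements merged into one kernel-verified Lean document; each statement's English description precedes it below -/
import Mathlib

section
/- Every finite simple graph of order n has at most n − 2 very typical vertices and at most n − 2 typical vertices. -/
variable {V : Type*} [Fintype V]

/-- A vertex is *very strong* if it has degree ≥ 2 and every neighbor has strictly
smaller degree. -/
def SimpleGraph.VeryStrongVertex (G : SimpleGraph V) [DecidableRel G.Adj] (u : V) : Prop :=
  2 ≤ G.degree u ∧ ∀ v, G.Adj u v → G.degree v < G.degree u

/-- A vertex is *strong* if it has degree ≥ 2, every neighbor has degree ≤ its own,
some neighbor has strictly smaller degree and some neighbor has equal degree. -/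
def SimpleGraph.StrongVertex (G : SimpleGraph V) [DecidableRel G.Adj] (u : V) : Prop :=
  2 ≤ G.degree u ∧ (∀ v, G.Adj u v → G.degree v ≤ G.degree u) ∧
    (∃ x, G.Adj u x ∧ G.degree x < G.degree u) ∧ (∃ y, G.Adj u y ∧ G.degree y = G.degree u)

/-- A vertex is *regular* if every neighbor has the same degree as it. -/
def SimpleGraph.RegularVertex (G : SimpleGraph V) [DecidableRel G.Adj] (u : V) : Prop :=
  ∀ v, G.Adj u v → G.degree v = G.degree u

/-- A vertex is *very typical* if it has degree ≥ 2, every neighbor has degree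
different from its own, some neighbor has strictly larger degree and some neighbor has
strictly smaller degree. -/
def SimpleGraph.VeryTypicalVertex (G : SimpleGraph V) [DecidableRel G.Adj] (u : V) : Prop :=
  2 ≤ G.degree u ∧ (∀ v, G.Adj u v → G.degree v ≠ G.degree u) ∧
    (∃ x, G.Adj u x ∧ G.degree u < G.degree x) ∧ (∃ y, G.Adj u y ∧ G.degree y < G.degree u)

/-- A vertex is *typical* if it has degree ≥ 3 and there are three distinct neighbors
`x, y, z` with `d(x) < d(u) = d(y) < d(z)`. -/
def SimpleGraph.TypicalVertex (G : SimpleGraph V) [DecidableRel G.Adj] (u : V) : Prop :=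
  3 ≤ G.degree u ∧ ∃ x y z, G.Adj u x ∧ G.Adj u y ∧ G.Adj u z ∧
    x ≠ y ∧ x ≠ z ∧ y ≠ z ∧
    G.degree x < G.degree u ∧ G.degree u = G.degree y ∧ G.degree u < G.degree z

/-- A vertex is *weak* if it has degree ≥ 2, every neighbor has degree ≥ its own,
some neighbor has strictly larger degree and some neighbor has equal degree. -/
def SimpleGraph.WeakVertex (G : SimpleGraph V) [DecidableRel G.Adj] (u : V) : Prop :=
  2 ≤ G.degree u ∧ (∀ v, G.Adj u v → G.degree u ≤ G.degree v) ∧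
    (∃ x, G.Adj u x ∧ G.degree u < G.degree x) ∧ (∃ y, G.Adj u y ∧ G.degree y = G.degree u)

/-- A vertex is *very weak* if it has degree ≥ 1 and every neighbor has strictly
larger degree. -/
def SimpleGraph.VeryWeakVertex (G : SimpleGraph V) [DecidableRel G.Adj] (u : V) : Prop :=
  1 ≤ G.degree u ∧ ∀ v, G.Adj u v → G.degree u < G.degree v

/-- A graph is *pantypical* if it has at least one vertex of each of the seven types. -/
def SimpleGraph.Pantypical (G : SimpleGraph V) [DecidableRel G.Adj] : Prop :=
  (∃ u, G.VeryStrongVertex u) ∧ (∃ u, G.StrongVertex u) ∧ (∃ u, G.RegularVertex u) ∧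
  (∃ u, G.VeryTypicalVertex u) ∧ (∃ u, G.TypicalVertex u) ∧ (∃ u, G.WeakVertex u) ∧
  (∃ u, G.VeryWeakVertex u)

lemma aux_card_le {V : Type*} [Fintype V] (G : SimpleGraph V) [DecidableRel G.Adj]
    (n : ℕ) (hn : Fintype.card V = n) (P : Set V)
    (hhigh : ∀ u ∈ P, ∃ x, G.degree u < G.degree x)
    (hlow : ∀ u ∈ P, ∃ x, G.degree x < G.degree u) : P.ncard ≤ n - 2 := by
  rcases P.eq_empty_or_nonempty with h | ⟨u, hu⟩
  · simp [h]
  have hne : Nonempty V := ⟨u⟩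
  obtain ⟨a, -, ha⟩ := Finset.exists_max_image Finset.univ (fun v => G.degree v) ⟨u, Finset.mem_univ u⟩
  obtain ⟨b, -, hb⟩ := Finset.exists_min_image Finset.univ (fun v => G.degree v) ⟨u, Finset.mem_univ u⟩
  obtain ⟨x, hx⟩ := hhigh u hu
  obtain ⟨y, hy⟩ := hlow u hu
  have hax := ha x (Finset.mem_univ x)
  have hby := hb y (Finset.mem_univ y)
  have hab : a ≠ b := by
    intro h
    have := ha u (Finset.mem_univ u)
    have := hb u (Finset.mem_univ u)
    rw [h] at *
    omega
  have haP : a ∉ P := by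
    intro hp
    obtain ⟨z, hz⟩ := hhigh a hp
    exact absurd (ha z (Finset.mem_univ z)) (by omega)
  have hbP : b ∉ P := by
    intro hp
    obtain ⟨z, hz⟩ := hlow b hp
    exact absurd (hb z (Finset.mem_univ z)) (by omega)
  have hsub : P ⊆ Set.univ \ {a, b} := by
    intro v hv
    refine ⟨Set.mem_univ v, ?_⟩
    rintro (rfl | rfl) <;> [exact haP hv; exact hbP hv]
  calc P.ncard ≤ (Set.univ \ ({a, b} : Set V)).ncard :=
        Set.ncard_le_ncard hsub (Set.toFinite _)
    _ = (Set.univ : Set V).ncard - ({a, b} : Set V).ncard :=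
        Set.ncard_diff (Set.subset_univ _)
    _ ≤ n - 2 := by
        rw [Set.ncard_univ, Nat.card_eq_fintype_card, hn, Set.ncard_pair hab]

/-- A graph of order n has at most n − 2 very typical vertices and at most n − 2
typical vertices. -/
theorem card_veryTypical_and_typical_le (G : SimpleGraph V) [DecidableRel G.Adj] (n : ℕ)
    (hn : Fintype.card V = n) :
    {u | G.VeryTypicalVertex u}.ncard ≤ n - 2 ∧ {u | G.TypicalVertex u}.ncard ≤ n - 2 := by
  constructor
  · refine aux_card_le G n hn _ ?_ ?_
    · rintro u ⟨-, -, ⟨x, -, hx⟩, -⟩; exact ⟨x, hx⟩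
    · rintro u ⟨-, -, -, ⟨y, -, hy⟩⟩; exact ⟨y, hy⟩
  · refine aux_card_le G n hn _ ?_ ?_
    · rintro u ⟨-, x, y, z, -, -, -, -, -, -, -, -, hz⟩; exact ⟨z, hz⟩
    · rintro u ⟨-, x, y, z, -, -, -, -, -, -, hx, -, -⟩; exact ⟨x, hx⟩
end

section
/- No finite simple graph of order 8 has 6 typical vertices; i.e., every graph on 8 vertices has at most 5 typical vertices. -/
variable {V : Type*} [Fintype V]

open Finset

section helpers
variable [DecidableEq V]

private lemma nbr_ub (G : SimpleGraph V) [DecidableRel G.Adj] {u : V} {K W : Finset V}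
    (hK : K ⊆ G.neighborFinset u) (hd : Disjoint K W) :
    K.card + (G.neighborFinset u ∩ W).card ≤ G.degree u := by
  have hdisj : Disjoint K (G.neighborFinset u ∩ W) :=
    hd.mono_right inter_subset_right
  rw [← card_union_of_disjoint hdisj, ← G.card_neighborFinset_eq_degree u]
  exact card_le_card (union_subset hK inter_subset_left)

private lemma nbr_lb (G : SimpleGraph V) [DecidableRel G.Adj] {u : V} {S R : Finset V}
    (hsub : G.neighborFinset u ⊆ S ∪ R) :
    G.degree u ≤ (G.neighborFinset u ∩ S).card + R.card := by
  rw [← G.card_neighborFinset_eq_degree u]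
  calc (G.neighborFinset u).card ≤ ((G.neighborFinset u ∩ S) ∪ R).card := by
        apply card_le_card
        intro v hv
        rcases mem_union.mp (hsub hv) with h | h
        · exact mem_union_left _ (mem_inter.mpr ⟨hv, h⟩)
        · exact mem_union_right _ h
    _ ≤ (G.neighborFinset u ∩ S).card + R.card := card_union_le _ _

private lemma dc (G : SimpleGraph V) [DecidableRel G.Adj] (S W : Finset V) :
    ∑ u ∈ S, (G.neighborFinset u ∩ W).card = ∑ w ∈ W, (G.neighborFinset w ∩ S).card := by
  have key : ∀ A B : Finset V, ∑ u ∈ A, (G.neighborFinset u ∩ B).card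
      = ∑ u ∈ A, ∑ v ∈ B, (if G.Adj u v then 1 else 0) := by
    intro A B
    refine Finset.sum_congr rfl fun u _ => ?_
    rw [inter_comm, ← filter_mem_eq_inter, card_filter]
    exact Finset.sum_congr rfl fun v _ => by simp [SimpleGraph.mem_neighborFinset]
  rw [key, key, Finset.sum_comm]
  exact Finset.sum_congr rfl fun v _ => Finset.sum_congr rfl fun u _ => by
    simp only [SimpleGraph.adj_comm]

private lemma card_four_le {α : Type*} [DecidableEq α] {s1 s2 s3 s4 t : Finset α}
    (h1 : s1 ⊆ t) (h2 : s2 ⊆ t) (h3 : s3 ⊆ t) (h4 : s4 ⊆ t)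
    (d12 : Disjoint s1 s2) (d13 : Disjoint s1 s3) (d14 : Disjoint s1 s4)
    (d23 : Disjoint s2 s3) (d24 : Disjoint s2 s4) (d34 : Disjoint s3 s4) :
    s1.card + s2.card + s3.card + s4.card ≤ t.card := by
  have e1 : Disjoint (s1 ∪ s2) s3 := disjoint_union_left.mpr ⟨d13, d23⟩
  have e2 : Disjoint (s1 ∪ s2 ∪ s3) s4 := disjoint_union_left.mpr
    ⟨disjoint_union_left.mpr ⟨d14, d24⟩, d34⟩
  calc s1.card + s2.card + s3.card + s4.card
      = (s1 ∪ s2 ∪ s3 ∪ s4).card := by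
        rw [card_union_of_disjoint e2, card_union_of_disjoint e1, card_union_of_disjoint d12]
    _ ≤ t.card := card_le_card (union_subset (union_subset (union_subset h1 h2) h3) h4)

end helpers

/-- Every graph on 8 vertices has at most 5 typical vertices. -/
theorem typical_le_five_of_card_eight (G : SimpleGraph V) [DecidableRel G.Adj]
    (h : Fintype.card V = 8) : {u | G.TypicalVertex u}.ncard ≤ 5 := by
  classical
  by_contra hcon
  push_neg at hcon
  set T : Finset V := Finset.univ.filter (fun u => G.TypicalVertex u) with hTdef
  have hsetT : {u | G.TypicalVertex u} = ↑T := by ext u; simp [hTdef]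
  rw [hsetT, Set.ncard_coe_finset] at hcon
  have hT6 : 6 ≤ T.card := hcon
  have hmemT : ∀ u, u ∈ T ↔ G.TypicalVertex u := by intro u; simp [hTdef]
  have hlo : ∀ u ∈ T, ∃ x, G.Adj u x ∧ G.degree x < G.degree u := by
    intro u hu
    obtain ⟨-, x, y, z, hx, hy, hz, -, -, -, h1, h2, h3⟩ := (hmemT u).1 hu
    exact ⟨x, hx, h1⟩
  have heq : ∀ u ∈ T, ∃ y, G.Adj u y ∧ G.degree y = G.degree u := by
    intro u hu
    obtain ⟨-, x, y, z, hx, hy, hz, -, -, -, h1, h2, h3⟩ := (hmemT u).1 hu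
    exact ⟨y, hy, h2.symm⟩
  have hhi : ∀ u ∈ T, ∃ z, G.Adj u z ∧ G.degree u < G.degree z := by
    intro u hu
    obtain ⟨-, x, y, z, hx, hy, hz, -, -, -, h1, h2, h3⟩ := (hmemT u).1 hu
    exact ⟨z, hz, h3⟩
  have hdeg3 : ∀ u ∈ T, 3 ≤ G.degree u := fun u hu => ((hmemT u).1 hu).1
  have hTne : T.Nonempty := Finset.card_pos.mp (by omega)
  obtain ⟨u0, hu0T, hmin⟩ := Finset.exists_min_image T (fun u => G.degree u) hTne
  obtain ⟨u1, hu1T, hmax⟩ := Finset.exists_max_image T (fun u => G.degree u) hTne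
  set m := G.degree u0 with hm
  set M := G.degree u1 with hM
  obtain ⟨a, hadja, hda⟩ := hlo u0 hu0T
  obtain ⟨b, hadjb, hdb⟩ := hhi u1 hu1T
  have hmM : m ≤ M := hmin u1 hu1T
  have haT : a ∉ T := fun hx => absurd (hmin a hx) (by omega)
  have hbT : b ∉ T := fun hx => absurd (hmax b hx) (by omega)
  have hab : a ≠ b := by
    rintro rfl
    omega
  have hcard8 : (Finset.univ : Finset V).card = 8 := by simpa using h
  have hT8 : T.card ≤ 8 := hcard8 ▸ Finset.card_le_univ T
  have hcompl : ∀ v, v ∉ T → v = a ∨ v = b := by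
    intro v hv
    by_contra hne
    push_neg at hne
    have hsub : ({v, a, b} : Finset V) ⊆ Finset.univ \ T := by
      intro x hx
      simp only [mem_insert, mem_singleton] at hx
      rcases hx with rfl | rfl | rfl
      · exact mem_sdiff.mpr ⟨mem_univ _, hv⟩
      · exact mem_sdiff.mpr ⟨mem_univ _, haT⟩
      · exact mem_sdiff.mpr ⟨mem_univ _, hbT⟩
    have hc3 : ({v, a, b} : Finset V).card = 3 := by
      rw [card_insert_of_notMem (by simp [hne.1, hne.2]),
        card_insert_of_notMem (by simp [hab]), card_singleton]
    have hle := card_le_card hsub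
    rw [card_sdiff_of_subset (Finset.subset_univ T), hcard8, hc3] at hle
    omega
  have hTcard : T.card = 6 := by
    have hsub : (Finset.univ \ T) ⊆ {a, b} := by
      intro v hv
      rcases hcompl v (mem_sdiff.mp hv).2 with rfl | rfl <;> simp
    have hle := card_le_card hsub
    rw [card_sdiff_of_subset (Finset.subset_univ T), hcard8] at hle
    have hsub2 : ({a, b} : Finset V) ⊆ Finset.univ \ T := by
      intro x hx
      simp only [mem_insert, mem_singleton] at hx
      rcases hx with rfl | rfl
      · exact mem_sdiff.mpr ⟨mem_univ _, haT⟩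
      · exact mem_sdiff.mpr ⟨mem_univ _, hbT⟩
    have hge := card_le_card hsub2
    rw [card_sdiff_of_subset (Finset.subset_univ T), hcard8] at hge
    have hc2 : ({a, b} : Finset V).card = 2 := by
      rw [card_insert_of_notMem (by simp [hab]), card_singleton]
    omega
  have hdeg7 : ∀ v : V, G.degree v ≤ 7 := fun v => by
    have := G.degree_lt_card_verts v
    omega
  have hm3 : 3 ≤ m := hdeg3 u0 hu0T
  have hM6 : M ≤ 6 := by have := hdeg7 b; omega
  have hpartner : ∀ u ∈ T, ∃ y ∈ T, G.Adj u y ∧ G.degree y = G.degree u := by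
    intro u hu
    obtain ⟨y, hadj, hdy⟩ := heq u hu
    refine ⟨y, ?_, hadj, hdy⟩
    by_contra hyT
    have h1 := hmin u hu
    have h2 := hmax u hu
    rcases hcompl y hyT with rfl | rfl <;> omega
  have hfib2 : ∀ u ∈ T, 2 ≤ (T.filter (fun v => G.degree v = G.degree u)).card := by
    intro u hu
    obtain ⟨y, hyT, hadj, hdy⟩ := hpartner u hu
    have hne : y ≠ u := (G.ne_of_adj hadj).symm
    have hsub : ({y, u} : Finset V) ⊆ T.filter (fun v => G.degree v = G.degree u) := by
      intro x hx
      simp only [mem_insert, mem_singleton] at hx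
      rcases hx with rfl | rfl
      · exact mem_filter.mpr ⟨hyT, hdy⟩
      · exact mem_filter.mpr ⟨hu, rfl⟩
    calc 2 = ({y, u} : Finset V).card := by
          rw [card_insert_of_notMem (by simp [hne]), card_singleton]
      _ ≤ _ := card_le_card hsub
  have hlow : ∀ u ∈ T, ∃ x, G.Adj u x ∧ G.degree x < G.degree u ∧ (x ∈ T ∨ x = a) := by
    intro u hu
    obtain ⟨x, hadj, hlt⟩ := hlo u hu
    refine ⟨x, hadj, hlt, ?_⟩
    by_cases hxT : x ∈ T
    · exact Or.inl hxT
    · rcases hcompl x hxT with rfl | rfl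
      · exact Or.inr rfl
      · exact absurd (hmax u hu) (by omega)
  have hminadjA : ∀ u ∈ T, G.degree u = m → G.Adj u a := by
    intro u hu hdu
    obtain ⟨x, hadj, hlt, hloc⟩ := hlow u hu
    rcases hloc with hxT | rfl
    · exact absurd (hmin x hxT) (by omega)
    · exact hadj
  have hmaxadjB : ∀ u ∈ T, G.degree u = M → G.Adj u b := by
    intro u hu hdu
    obtain ⟨z, hadj, hlt⟩ := hhi u hu
    by_cases hzT : z ∈ T
    · exact absurd (hmax z hzT) (by omega)
    · rcases hcompl z hzT with rfl | rfl
      · omega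
      · exact hadj
  set S1 : Finset V := T.filter (fun v => G.degree v = m) with hS1def
  set S2 : Finset V := T.filter (fun v => G.degree v = M) with hS2def
  have hS1T : S1 ⊆ T := filter_subset _ _
  have hS2T : S2 ⊆ T := filter_subset _ _
  have hS1mem : ∀ u, u ∈ S1 ↔ u ∈ T ∧ G.degree u = m := fun u => mem_filter
  have hS2mem : ∀ u, u ∈ S2 ↔ u ∈ T ∧ G.degree u = M := fun u => mem_filter
  have hS1a : S1 ⊆ G.neighborFinset a := by
    intro u hu
    rw [SimpleGraph.mem_neighborFinset]
    exact ((hminadjA u (hS1T hu) (mem_filter.mp hu).2).symm)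
  have hS2b : S2 ⊆ G.neighborFinset b := by
    intro u hu
    rw [SimpleGraph.mem_neighborFinset]
    exact ((hmaxadjB u (hS2T hu) (mem_filter.mp hu).2).symm)
  have hS1card : 2 ≤ S1.card := hfib2 u0 hu0T
  have hS2card : 2 ≤ S2.card := hfib2 u1 hu1T
  have hdaS1 : S1.card ≤ G.degree a := by
    rw [← G.card_neighborFinset_eq_degree a]
    exact card_le_card hS1a
  have hdbS2 : S2.card ≤ G.degree b := by
    rw [← G.card_neighborFinset_eq_degree b]
    exact card_le_card hS2b
  have haTne : ∀ u ∈ T, u ≠ a := fun u hu he => haT (he ▸ hu)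
  have hbTne : ∀ u ∈ T, u ≠ b := fun u hu he => hbT (he ▸ hu)
  have hmemnbr : ∀ u v : V, v ∈ G.neighborFinset u ↔ G.Adj u v := by
    intro u v; exact SimpleGraph.mem_neighborFinset _ _ _
  have hfull : ∀ v : V, G.degree v = 7 → ∀ x : V, x ≠ v → G.Adj v x := by
    intro v hdv x hx
    have hsub : G.neighborFinset v ⊆ Finset.univ.erase v := by
      intro y hy
      exact mem_erase.mpr ⟨(G.ne_of_adj ((hmemnbr v y).mp hy)).symm, mem_univ y⟩
    have hcarde : (Finset.univ.erase v).card = 7 := by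
      rw [card_erase_of_mem (mem_univ v), hcard8]
    have heq2 : G.neighborFinset v = Finset.univ.erase v :=
      eq_of_subset_of_card_le hsub
        (by rw [hcarde, G.card_neighborFinset_eq_degree, hdv])
    exact (hmemnbr v x).mp (heq2 ▸ mem_erase.mpr ⟨hx, mem_univ x⟩)
  have hpartnerF : ∀ u ∈ T, ∃ y, y ∈ T ∧ G.degree y = G.degree u ∧ y ≠ u ∧ G.Adj u y := by
    intro u hu
    obtain ⟨y, hyT, hadj, hdy⟩ := hpartner u hu
    exact ⟨y, hyT, hdy, (G.ne_of_adj hadj).symm, hadj⟩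
  by_cases hcase1 : m = M
  · -- one degree class
    have hTsub : T ⊆ G.neighborFinset a := by
      intro u hu
      apply hS1a
      refine mem_filter.mpr ⟨hu, ?_⟩
      have := hmin u hu; have := hmax u hu; omega
    have h6 : 6 ≤ G.degree a := by
      rw [← G.card_neighborFinset_eq_degree a]
      calc 6 = T.card := hTcard.symm
        _ ≤ _ := card_le_card hTsub
    omega
  · have hmltM : m < M := lt_of_le_of_ne hmM hcase1
    have hdisj12 : Disjoint S1 S2 := by
      rw [Finset.disjoint_left]
      intro x h1 h2
      have := (mem_filter.mp h1).2
      have := (mem_filter.mp h2).2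
      omega
    by_cases hmid : ∃ w ∈ T, m < G.degree w ∧ G.degree w < M
    · -- three degree classes
      obtain ⟨w0, hw0T, hp1, hp2⟩ := hmid
      set p := G.degree w0 with hp
      set Sp : Finset V := T.filter (fun v => G.degree v = p) with hSpdef
      have hSpT : Sp ⊆ T := filter_subset _ _
      have hSpdeg : ∀ u ∈ Sp, G.degree u = p := fun u hu => (mem_filter.mp hu).2
      have hS1deg : ∀ u ∈ S1, G.degree u = m := fun u hu => (mem_filter.mp hu).2
      have hS2deg : ∀ w ∈ S2, G.degree w = M := fun w hw => (mem_filter.mp hw).2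
      have hSpcard : 2 ≤ Sp.card := hfib2 w0 hw0T
      have hdisjf : ∀ d e : ℕ, d ≠ e →
          Disjoint (T.filter (fun v => G.degree v = d)) (T.filter (fun v => G.degree v = e)) := by
        intro d e hde
        rw [disjoint_left]
        intro x h1 h2
        have g1 := (mem_filter.mp h1).2
        have g2 := (mem_filter.mp h2).2
        omega
      have hcover : ∀ u ∈ T, G.degree u = m ∨ G.degree u = p ∨ G.degree u = M := by
        intro u hu
        by_contra hq
        push_neg at hq
        obtain ⟨hq1, hq2, hq3⟩ := hq
        have hSq2 := hfib2 u hu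
        have h4 := card_four_le hS1T hSpT hS2T
          (filter_subset (fun v => G.degree v = G.degree u) T)
          (hdisjf m p (by omega)) (hdisjf m M (by omega)) (hdisjf m (G.degree u) (by omega))
          (hdisjf p M (by omega)) (hdisjf p (G.degree u) (by omega))
          (hdisjf M (G.degree u) (by omega))
        rw [hTcard] at h4
        omega
      have hsum3 : S1.card + Sp.card + S2.card ≤ 6 := by
        have h4 := card_four_le hS1T hSpT hS2T (empty_subset T)
          (hdisjf m p (by omega)) (hdisjf m M (by omega)) (disjoint_empty_right _)
          (hdisjf p M (by omega)) (disjoint_empty_right _) (disjoint_empty_right _)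
        rw [hTcard] at h4
        simpa using h4
      have hc1 : S1.card = 2 := by omega
      have hcp : Sp.card = 2 := by omega
      have hc2 : S2.card = 2 := by omega
      have haS1 : a ∉ S1 := fun hx => haT (hS1T hx)
      have haS2 : a ∉ S2 := fun hx => haT (hS2T hx)
      have haSp : a ∉ Sp := fun hx => haT (hSpT hx)
      have hbS1 : b ∉ S1 := fun hx => hbT (hS1T hx)
      have hbS2 : b ∉ S2 := fun hx => hbT (hS2T hx)
      have hbSp : b ∉ Sp := fun hx => hbT (hSpT hx)
      have hpart1 : ∀ u ∈ S1, ∃ y ∈ S1, y ≠ u ∧ G.Adj u y := by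
        intro u hu
        obtain ⟨y, hyT, hdy, hne, hadj⟩ := hpartnerF u (hS1T hu)
        exact ⟨y, mem_filter.mpr ⟨hyT, by rw [hdy, hS1deg u hu]⟩, hne, hadj⟩
      have hsmallp : ∀ x ∈ Sp, ∃ s, G.Adj x s ∧ (s ∈ S1 ∨ s = a) := by
        intro x hx
        obtain ⟨s, hadj, hlt, hloc⟩ := hlow x (hSpT hx)
        refine ⟨s, hadj, ?_⟩
        rcases hloc with hsT | rfl
        · left
          have hdx := hSpdeg x hx
          rcases hcover s hsT with hd | hd | hd
          · exact mem_filter.mpr ⟨hsT, hd⟩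
          · exfalso; omega
          · exfalso; omega
        · right; rfl
      by_cases hm3e : m = 3
      · -- (3, p, M)
        have hpge : 4 ≤ p := by omega
        have hMge : 5 ≤ M := by omega
        have hda2 : G.degree a = 2 := by omega
        have hnbra : G.neighborFinset a = S1 :=
          (eq_of_subset_of_card_le hS1a
            (by rw [G.card_neighborFinset_eq_degree, hda2, hc1])).symm
        have hnadj : ∀ v : V, v ∉ S1 → ¬ G.Adj v a := by
          intro v hv hadj
          have hmem : v ∈ G.neighborFinset a := (hmemnbr a v).mpr hadj.symm
          rw [hnbra] at hmem
          exact hv hmem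
        have hdisjp2 : Disjoint Sp S2 := hdisjf p M (by omega)
        have hupperu : ∀ u ∈ S1, (G.neighborFinset u ∩ (Sp ∪ S2)).card ≤ 1 := by
          intro u hu
          obtain ⟨y, hy1, hyne, hyadj⟩ := hpart1 u hu
          have hKsub : ({a, y} : Finset V) ⊆ G.neighborFinset u := by
            intro x hx
            simp only [mem_insert, mem_singleton] at hx
            rcases hx with rfl | rfl
            · exact (hmemnbr u x).mpr (hminadjA u (hS1T hu) (hS1deg u hu))
            · exact (hmemnbr u x).mpr hyadj
          have hKd : Disjoint ({a, y} : Finset V) (Sp ∪ S2) := by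
            rw [disjoint_left]
            intro x hx hx2
            simp only [mem_insert, mem_singleton] at hx
            rcases mem_union.mp hx2 with hx2' | hx2'
            · rcases hx with rfl | rfl
              · exact haSp hx2'
              · have h1 := hS1deg x hy1; have h2 := hSpdeg x hx2'; omega
            · rcases hx with rfl | rfl
              · exact haS2 hx2'
              · have h1 := hS1deg x hy1; have h2 := hS2deg x hx2'; omega
          have hKcard : ({a, y} : Finset V).card = 2 := by
            rw [card_insert_of_notMem (by simp [Ne.symm (haTne y (hS1T hy1))]),
              card_singleton]
          have hub := nbr_ub G hKsub hKd
          have hdu := hS1deg u hu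
          omega
        have hlowerp : ∀ x ∈ Sp, 1 ≤ (G.neighborFinset x ∩ S1).card := by
          intro x hx
          obtain ⟨s, hadj, hloc⟩ := hsmallp x hx
          rcases hloc with hs1 | rfl
          · exact card_pos.mpr ⟨s, mem_inter.mpr ⟨(hmemnbr x s).mpr hadj, hs1⟩⟩
          · exfalso
            have hxS1 : x ∉ S1 := fun hx1 => by
              have h1 := hS1deg x hx1; have h2 := hSpdeg x hx; omega
            exact hnadj x hxS1 hadj
        have hlowerw : ∀ w ∈ S2, 1 ≤ (G.neighborFinset w ∩ S1).card := by
          intro w hw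
          have hwS1 : w ∉ S1 := fun hx1 => by
            have h1 := hS1deg w hx1; have h2 := hS2deg w hw; omega
          have hsub : G.neighborFinset w ⊆ S1 ∪ (Finset.univ \ insert w (insert a S1)) := by
            intro v hv
            by_cases hvA : v ∈ S1
            · exact mem_union_left _ hvA
            · refine mem_union_right _ (mem_sdiff.mpr ⟨mem_univ _, fun hvm => ?_⟩)
              rcases mem_insert.mp hvm with hvw | hvm2
              · exact G.ne_of_adj ((hmemnbr w v).mp hv) hvw.symm
              rcases mem_insert.mp hvm2 with hva | hvm3
              · exact hnadj w hwS1 (hva ▸ ((hmemnbr w v).mp hv))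
              · exact hvA hvm3
          have hcR : (Finset.univ \ insert w (insert a S1)).card = 4 := by
            rw [card_sdiff_of_subset (Finset.subset_univ _), hcard8, card_insert_of_notMem,
              card_insert_of_notMem haS1, hc1]
            simp only [mem_insert]
            push_neg
            exact ⟨haTne w (hS2T hw), hwS1⟩
          have hlb := nbr_lb G hsub
          rw [hcR, hS2deg w hw] at hlb
          omega
        have hE1 : 4 ≤ ∑ t ∈ Sp ∪ S2, (G.neighborFinset t ∩ S1).card := by
          rw [Finset.sum_union hdisjp2]
          have hA : 2 ≤ ∑ x ∈ Sp, (G.neighborFinset x ∩ S1).card := by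
            calc 2 = ∑ _x ∈ Sp, 1 := by simp [Finset.sum_const, hcp]
              _ ≤ _ := Finset.sum_le_sum hlowerp
          have hB : 2 ≤ ∑ w ∈ S2, (G.neighborFinset w ∩ S1).card := by
            calc 2 = ∑ _w ∈ S2, 1 := by simp [Finset.sum_const, hc2]
              _ ≤ _ := Finset.sum_le_sum hlowerw
          omega
        have hE2 : ∑ u ∈ S1, (G.neighborFinset u ∩ (Sp ∪ S2)).card ≤ 2 := by
          calc ∑ u ∈ S1, (G.neighborFinset u ∩ (Sp ∪ S2)).card
              ≤ ∑ _u ∈ S1, 1 := Finset.sum_le_sum hupperu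
            _ = 2 := by simp [Finset.sum_const, hc1]
        rw [← dc G S1 (Sp ∪ S2)] at hE1
        omega
      · -- (4, 5, 6)
        have hmv : m = 4 := by omega
        have hpv : p = 5 := by omega
        have hMv : M = 6 := by omega
        have hdb7 : G.degree b = 7 := by have := hdeg7 b; omega
        have hada : G.Adj a b := (hfull b hdb7 a hab).symm
        have hnbra : G.neighborFinset a = insert b S1 := by
          have hsub : insert b S1 ⊆ G.neighborFinset a := by
            intro x hx
            rcases mem_insert.mp hx with rfl | hx1
            · exact (hmemnbr a x).mpr hada
            · exact hS1a hx1
          have hc : (insert b S1).card = 3 := by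
            rw [card_insert_of_notMem hbS1, hc1]
          refine (eq_of_subset_of_card_le hsub ?_).symm
          rw [G.card_neighborFinset_eq_degree, hc]
          omega
        obtain ⟨y, hy1, hyne, hyadj⟩ := hpart1 u0 (mem_filter.mpr ⟨hu0T, hm.symm⟩)
        have hS2nbr : ∀ w ∈ S2, G.Adj w u0 := by
          intro w hw
          have hwa : ¬ G.Adj w a := by
            intro hadj
            have hmem : w ∈ G.neighborFinset a := (hmemnbr a w).mpr hadj.symm
            rw [hnbra] at hmem
            rcases mem_insert.mp hmem with rfl | hx1
            · exact hbS2 hw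
            · have h1 := hS1deg w hx1; have h2 := hS2deg w hw; omega
          have hwsub : G.neighborFinset w ⊆ Finset.univ \ {w, a} := by
            intro v hv
            have hadj := (hmemnbr w v).mp hv
            refine mem_sdiff.mpr ⟨mem_univ _, ?_⟩
            simp only [mem_insert, mem_singleton]
            push_neg
            exact ⟨(G.ne_of_adj hadj).symm, fun he => hwa (he ▸ hadj)⟩
          have hcc : (Finset.univ \ {w, a}).card = 6 := by
            rw [card_sdiff_of_subset (Finset.subset_univ _), hcard8,
              card_insert_of_notMem (by simp [haTne w (hS2T hw)]), card_singleton]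
          have hequ : G.neighborFinset w = Finset.univ \ {w, a} := by
            apply eq_of_subset_of_card_le hwsub
            rw [G.card_neighborFinset_eq_degree, hS2deg w hw, hcc, hMv]
          have hu0mem : u0 ∈ G.neighborFinset w := by
            rw [hequ]
            refine mem_sdiff.mpr ⟨mem_univ _, ?_⟩
            simp only [mem_insert, mem_singleton]
            push_neg
            constructor
            · intro he
              have h1 := hS2deg w hw; rw [← he] at h1; omega
            · exact haTne u0 hu0T
          exact (hmemnbr w u0).mp hu0mem
        have hKsub : insert a (insert b (insert y S2)) ⊆ G.neighborFinset u0 := by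
          intro x hx
          rcases mem_insert.mp hx with rfl | hx1
          · exact (hmemnbr u0 x).mpr (hminadjA u0 hu0T hm.symm)
          rcases mem_insert.mp hx1 with rfl | hx2
          · exact (hmemnbr u0 x).mpr (hfull x hdb7 u0 (hbTne u0 hu0T)).symm
          rcases mem_insert.mp hx2 with rfl | hx3
          · exact (hmemnbr u0 x).mpr hyadj
          · exact (hmemnbr u0 x).mpr (hS2nbr x hx3).symm
        have hKcard : (insert a (insert b (insert y S2))).card = 5 := by
          have hyS2 : y ∉ S2 := fun hx => by
            have h1 := hS1deg y hy1; have h2 := hS2deg y hx; omega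
          rw [card_insert_of_notMem, card_insert_of_notMem, card_insert_of_notMem hyS2,
            hc2]
          · simp only [mem_insert]
            push_neg
            exact ⟨Ne.symm (hbTne y (hS1T hy1)), hbS2⟩
          · simp only [mem_insert]
            push_neg
            exact ⟨hab, Ne.symm (haTne y (hS1T hy1)), haS2⟩
        have hle := card_le_card hKsub
        rw [G.card_neighborFinset_eq_degree, hKcard] at hle
        omega
    · -- two degree classes
      push_neg at hmid
      have hcover : ∀ u ∈ T, G.degree u = m ∨ G.degree u = M := by
        intro u hu
        have h1 := hmin u hu
        have h2 := hmax u hu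
        rcases Nat.lt_or_ge (G.degree u) M with hx | hx
        · left
          by_contra hne
          exact absurd (hmid u hu (by omega)) (by omega)
        · right; omega
      have hunion : S1 ∪ S2 = T := by
        apply Finset.Subset.antisymm (union_subset hS1T hS2T)
        intro u hu
        rcases hcover u hu with hd | hd
        · exact mem_union_left _ (mem_filter.mpr ⟨hu, hd⟩)
        · exact mem_union_right _ (mem_filter.mpr ⟨hu, hd⟩)
      have hsum : S1.card + S2.card = 6 := by
        rw [← card_union_of_disjoint hdisj12, hunion, hTcard]
      have hkm : S1.card + 1 ≤ m := by
        have := hdaS1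
        omega
      have hS1deg : ∀ u ∈ S1, G.degree u = m := fun u hu => (mem_filter.mp hu).2
      have hS2deg : ∀ w ∈ S2, G.degree w = M := fun w hw => (mem_filter.mp hw).2
      have huniv : ∀ v : V, v ∈ S1 ∨ v ∈ S2 ∨ v = a ∨ v = b := by
        intro v
        by_cases hvT : v ∈ T
        · rcases hcover v hvT with hd | hd
          · exact Or.inl (mem_filter.mpr ⟨hvT, hd⟩)
          · exact Or.inr (Or.inl (mem_filter.mpr ⟨hvT, hd⟩))
        · rcases hcompl v hvT with rfl | rfl
          · exact Or.inr (Or.inr (Or.inl rfl))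
          · exact Or.inr (Or.inr (Or.inr rfl))
      have haS1 : a ∉ S1 := fun hx => haT (hS1T hx)
      have haS2 : a ∉ S2 := fun hx => haT (hS2T hx)
      have hbS1 : b ∉ S1 := fun hx => hbT (hS1T hx)
      have hbS2 : b ∉ S2 := fun hx => hbT (hS2T hx)
      have hpart1 : ∀ u ∈ S1, ∃ y ∈ S1, y ≠ u ∧ G.Adj u y := by
        intro u hu
        obtain ⟨y, hyT, hdy, hne, hadj⟩ := hpartnerF u (hS1T hu)
        exact ⟨y, mem_filter.mpr ⟨hyT, by rw [hdy, hS1deg u hu]⟩, hne, hadj⟩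
      have hsmall2 : ∀ w ∈ S2, ∃ x, G.Adj w x ∧ (x ∈ S1 ∨ x = a) := by
        intro w hw
        obtain ⟨x, hadj, hlt, hloc⟩ := hlow w (hS2T hw)
        refine ⟨x, hadj, ?_⟩
        rcases hloc with hxT | rfl
        · left
          rcases hcover x hxT with hd | hd
          · exact mem_filter.mpr ⟨hxT, hd⟩
          · exfalso; have h1 := hS2deg w hw; omega
        · right; rfl
      have hk : S1.card = 2 ∨ S1.card = 3 ∨ S1.card = 4 := by omega
      rcases hk with hk | hk | hk
      · -- k = 2
        have hS2card4 : S2.card = 4 := by omega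
        have hm345 : m = 3 ∨ m = 4 ∨ m = 5 := by omega
        rcases hm345 with hmv | hmv
        · -- m = 3, any M
          have hda2 : G.degree a = 2 := by omega
          have hnbra : G.neighborFinset a = S1 :=
            (eq_of_subset_of_card_le hS1a
              (by rw [G.card_neighborFinset_eq_degree, hda2, hk])).symm
          have hnadj : ∀ w ∈ S2, ¬ G.Adj w a := by
            intro w hw hadj
            have hmem : w ∈ G.neighborFinset a := (hmemnbr a w).mpr hadj.symm
            rw [hnbra] at hmem
            have h1 := hS1deg w hmem; have h2 := hS2deg w hw; omega
          have hlower : ∀ w ∈ S2, 1 ≤ (G.neighborFinset w ∩ S1).card := by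
            intro w hw
            obtain ⟨x, hadj, hloc⟩ := hsmall2 w hw
            rcases hloc with hx1 | rfl
            · exact card_pos.mpr ⟨x, mem_inter.mpr ⟨(hmemnbr w x).mpr hadj, hx1⟩⟩
            · exact absurd hadj (hnadj w hw)
          have hupper : ∀ u ∈ S1, (G.neighborFinset u ∩ S2).card ≤ 1 := by
            intro u hu
            obtain ⟨y, hy1, hyne, hyadj⟩ := hpart1 u hu
            have hKsub : ({a, y} : Finset V) ⊆ G.neighborFinset u := by
              intro x hx
              simp only [mem_insert, mem_singleton] at hx
              rcases hx with rfl | rfl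
              · exact (hmemnbr u x).mpr (hminadjA u (hS1T hu) (hS1deg u hu))
              · exact (hmemnbr u x).mpr hyadj
            have hKd : Disjoint ({a, y} : Finset V) S2 := by
              rw [disjoint_left]
              intro x hx hx2
              simp only [mem_insert, mem_singleton] at hx
              rcases hx with rfl | rfl
              · exact haS2 hx2
              · have h1 := hS1deg x hy1; have h2 := hS2deg x hx2; omega
            have hKcard : ({a, y} : Finset V).card = 2 := by
              rw [card_insert_of_notMem (by simp [Ne.symm (haTne y (hS1T hy1))]),
                card_singleton]
            have hub := nbr_ub G hKsub hKd
            have hdu := hS1deg u hu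
            omega
          have hE1 : 4 ≤ ∑ w ∈ S2, (G.neighborFinset w ∩ S1).card := by
            calc 4 = ∑ _w ∈ S2, 1 := by simp [Finset.sum_const, hS2card4]
              _ ≤ _ := Finset.sum_le_sum hlower
          have hE2 : ∑ u ∈ S1, (G.neighborFinset u ∩ S2).card ≤ 2 := by
            calc ∑ u ∈ S1, (G.neighborFinset u ∩ S2).card
                ≤ ∑ _u ∈ S1, 1 := Finset.sum_le_sum hupper
              _ = 2 := by simp [Finset.sum_const, hk]
          rw [← dc G S1 S2] at hE1
          omega
        · -- m = 4 or 5
          have hdbM1 : M + 1 ≤ G.degree b := hdb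
          rcases hmv with hmv | hmv
          · have hM56 : M = 5 ∨ M = 6 := by omega
            rcases hM56 with hMv | hMv
            · -- (k,m,M) = (2,4,5)
              have hlowerw : ∀ w ∈ S2, 1 ≤ (G.neighborFinset w ∩ (insert a S1)).card := by
                intro w hw
                obtain ⟨x, hadj, hloc⟩ := hsmall2 w hw
                have hxA : x ∈ insert a S1 := by
                  rcases hloc with hx1 | rfl
                  · exact mem_insert_of_mem hx1
                  · exact mem_insert_self _ _
                exact card_pos.mpr ⟨x, mem_inter.mpr ⟨(hmemnbr w x).mpr hadj, hxA⟩⟩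
              have hlowerb : 2 ≤ (G.neighborFinset b ∩ (insert a S1)).card := by
                have hsub : G.neighborFinset b ⊆ (insert a S1) ∪ S2 := by
                  intro v hv
                  have hvb : v ≠ b := (G.ne_of_adj ((hmemnbr b v).mp hv)).symm
                  rcases huniv v with h1 | h1 | rfl | rfl
                  · exact mem_union_left _ (mem_insert_of_mem h1)
                  · exact mem_union_right _ h1
                  · exact mem_union_left _ (mem_insert_self _ _)
                  · exact absurd rfl hvb
                have := nbr_lb G hsub
                omega
              have hupperu : ∀ u ∈ S1,
                  (G.neighborFinset u ∩ (insert b S2)).card ≤ 2 := by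
                intro u hu
                obtain ⟨y, hy1, hyne, hyadj⟩ := hpart1 u hu
                have hKsub : ({a, y} : Finset V) ⊆ G.neighborFinset u := by
                  intro x hx
                  simp only [mem_insert, mem_singleton] at hx
                  rcases hx with rfl | rfl
                  · exact (hmemnbr u x).mpr (hminadjA u (hS1T hu) (hS1deg u hu))
                  · exact (hmemnbr u x).mpr hyadj
                have hKd : Disjoint ({a, y} : Finset V) (insert b S2) := by
                  rw [disjoint_left]
                  intro x hx hx2
                  simp only [mem_insert, mem_singleton] at hx
                  rcases mem_insert.mp hx2 with rfl | hx2'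
                  · rcases hx with rfl | rfl
                    · exact hab rfl
                    · exact hbTne x (hS1T hy1) rfl
                  · rcases hx with rfl | rfl
                    · exact haS2 hx2'
                    · have h1 := hS1deg x hy1; have h2 := hS2deg x hx2'; omega
                have hKcard : ({a, y} : Finset V).card = 2 := by
                  rw [card_insert_of_notMem (by simp [Ne.symm (haTne y (hS1T hy1))]),
                    card_singleton]
                have hub := nbr_ub G hKsub hKd
                have hdu := hS1deg u hu
                omega
              have huppera : (G.neighborFinset a ∩ (insert b S2)).card ≤ 1 := by
                have hKd : Disjoint S1 (insert b S2) := by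
                  rw [disjoint_left]
                  intro x hx hx2
                  rcases mem_insert.mp hx2 with rfl | hx2'
                  · exact hbS1 hx
                  · have h1 := hS1deg x hx; have h2 := hS2deg x hx2'; omega
                have hub := nbr_ub G hS1a hKd
                omega
              have hE1 : 6 ≤ ∑ s ∈ insert b S2, (G.neighborFinset s ∩ (insert a S1)).card := by
                rw [Finset.sum_insert hbS2]
                have h4 : 4 ≤ ∑ w ∈ S2, (G.neighborFinset w ∩ (insert a S1)).card := by
                  calc 4 = ∑ _w ∈ S2, 1 := by simp [Finset.sum_const, hS2card4]
                    _ ≤ _ := Finset.sum_le_sum hlowerw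
                omega
              have hE2 : ∑ t ∈ insert a S1, (G.neighborFinset t ∩ (insert b S2)).card ≤ 5 := by
                rw [Finset.sum_insert haS1]
                have h4 : ∑ u ∈ S1, (G.neighborFinset u ∩ (insert b S2)).card ≤ 4 := by
                  calc ∑ u ∈ S1, (G.neighborFinset u ∩ (insert b S2)).card
                      ≤ ∑ _u ∈ S1, 2 := Finset.sum_le_sum hupperu
                    _ = 4 := by simp [Finset.sum_const, hk]
                omega
              rw [dc G (insert a S1) (insert b S2)] at hE2
              omega
            · -- (k,m,M) = (2,4,6)
              have hdb7 : G.degree b = 7 := by have := hdeg7 b; omega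
              obtain ⟨y, hy1, hyne, hyadj⟩ := hpart1 u0 (mem_filter.mpr ⟨hu0T, hm.symm⟩)
              have hu0S1 : u0 ∈ S1 := mem_filter.mpr ⟨hu0T, hm.symm⟩
              have hnbra : G.neighborFinset a = insert b S1 := by
                have hsub : insert b S1 ⊆ G.neighborFinset a := by
                  intro x hx
                  rcases mem_insert.mp hx with rfl | hx1
                  · exact (hmemnbr a x).mpr (hfull x hdb7 a hab).symm
                  · exact hS1a hx1
                have hc : (insert b S1).card = 3 := by
                  rw [card_insert_of_notMem hbS1, hk]
                refine (eq_of_subset_of_card_le hsub ?_).symm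
                rw [G.card_neighborFinset_eq_degree, hc]
                omega
              have hS2nbr : ∀ w ∈ S2, G.Adj w u0 := by
                intro w hw
                have hwa : ¬ G.Adj a w := by
                  intro hadj
                  have hmem : w ∈ G.neighborFinset a := (hmemnbr a w).mpr hadj
                  rw [hnbra] at hmem
                  rcases mem_insert.mp hmem with rfl | hx1
                  · exact hbS2 hw
                  · have h1 := hS1deg w hx1; have h2 := hS2deg w hw; omega
                have hwsub : G.neighborFinset w ⊆ Finset.univ \ {w, a} := by
                  intro v hv
                  have hadj := (hmemnbr w v).mp hv
                  refine mem_sdiff.mpr ⟨mem_univ _, ?_⟩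
                  simp only [mem_insert, mem_singleton]
                  push_neg
                  exact ⟨(G.ne_of_adj hadj).symm, fun he => hwa (he ▸ hadj).symm⟩
                have hcc : (Finset.univ \ {w, a}).card = 6 := by
                  rw [card_sdiff_of_subset (Finset.subset_univ _), hcard8,
                    card_insert_of_notMem (by simp [haTne w (hS2T hw)]), card_singleton]
                have hequ : G.neighborFinset w = Finset.univ \ {w, a} := by
                  apply eq_of_subset_of_card_le hwsub
                  rw [G.card_neighborFinset_eq_degree, hS2deg w hw, hcc, hMv]
                have hu0mem : u0 ∈ G.neighborFinset w := by
                  rw [hequ]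
                  refine mem_sdiff.mpr ⟨mem_univ _, ?_⟩
                  simp only [mem_insert, mem_singleton]
                  push_neg
                  constructor
                  · intro he
                    have h1 := hS2deg w hw; rw [← he] at h1; omega
                  · exact haTne u0 hu0T
                exact (hmemnbr w u0).mp hu0mem
              have hKsub : insert a (insert b (insert y S2)) ⊆ G.neighborFinset u0 := by
                intro x hx
                rcases mem_insert.mp hx with rfl | hx1
                · exact (hmemnbr u0 x).mpr (hminadjA u0 hu0T hm.symm)
                rcases mem_insert.mp hx1 with rfl | hx2
                · exact (hmemnbr u0 x).mpr (hfull x hdb7 u0 (hbTne u0 hu0T)).symm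
                rcases mem_insert.mp hx2 with rfl | hx3
                · exact (hmemnbr u0 x).mpr hyadj
                · exact (hmemnbr u0 x).mpr (hS2nbr x hx3).symm
              have hKcard : (insert a (insert b (insert y S2))).card = 7 := by
                have hyS2 : y ∉ S2 := fun hx => by
                  have h1 := hS1deg y hy1; have h2 := hS2deg y hx; omega
                rw [card_insert_of_notMem, card_insert_of_notMem, card_insert_of_notMem hyS2,
                  hS2card4]
                · simp only [mem_insert]
                  push_neg
                  exact ⟨Ne.symm (hbTne y (hS1T hy1)), hbS2⟩
                · simp only [mem_insert]
                  push_neg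
                  exact ⟨hab, Ne.symm (haTne y (hS1T hy1)), haS2⟩
              have hle := card_le_card hKsub
              rw [G.card_neighborFinset_eq_degree, hKcard] at hle
              omega
          · -- (k,m,M) = (2,5,6)
            have hdb7 : G.degree b = 7 := by have := hdeg7 b; omega
            have hMv : M = 6 := by omega
            have hada : G.Adj a b := (hfull b hdb7 a hab).symm
            have hdage : 3 ≤ G.degree a := by
              have hsub : insert b S1 ⊆ G.neighborFinset a := by
                intro x hx
                rcases mem_insert.mp hx with rfl | hx1
                · exact (hmemnbr a x).mpr hada
                · exact hS1a hx1
              have hc : (insert b S1).card = 3 := by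
                rw [card_insert_of_notMem hbS1, hk]
              have := card_le_card hsub
              rw [G.card_neighborFinset_eq_degree, hc] at this
              omega
            have hlowerw : ∀ w ∈ S2, 2 ≤ (G.neighborFinset w ∩ (insert a S1)).card := by
              intro w hw
              have hwA : w ∉ insert a S1 := by
                simp only [mem_insert]
                push_neg
                refine ⟨haTne w (hS2T hw), fun hx => ?_⟩
                have h1 := hS1deg w hx; have h2 := hS2deg w hw; omega
              have hsub : G.neighborFinset w ⊆ (insert a S1) ∪ (Finset.univ \ insert w (insert a S1)) := by
                intro v hv
                by_cases hvA : v ∈ insert a S1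
                · exact mem_union_left _ hvA
                · refine mem_union_right _ (mem_sdiff.mpr ⟨mem_univ _, fun hvm => ?_⟩)
                  rcases mem_insert.mp hvm with hvw | hvm2
                  · exact G.ne_of_adj ((hmemnbr w v).mp hv) hvw.symm
                  · exact hvA hvm2
              have hcR : (Finset.univ \ insert w (insert a S1)).card = 4 := by
                rw [card_sdiff_of_subset (Finset.subset_univ _), hcard8, card_insert_of_notMem hwA,
                  card_insert_of_notMem haS1, hk]
              have := nbr_lb G hsub
              rw [hcR, hS2deg w hw, hMv] at this
              omega
            have hupperu : ∀ u ∈ S1, (G.neighborFinset u ∩ S2).card ≤ 2 := by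
              intro u hu
              obtain ⟨y, hy1, hyne, hyadj⟩ := hpart1 u hu
              have hKsub : ({a, b, y} : Finset V) ⊆ G.neighborFinset u := by
                intro x hx
                simp only [mem_insert, mem_singleton] at hx
                rcases hx with rfl | rfl | rfl
                · exact (hmemnbr u x).mpr (hminadjA u (hS1T hu) (hS1deg u hu))
                · exact (hmemnbr u x).mpr (hfull x hdb7 u (hbTne u (hS1T hu))).symm
                · exact (hmemnbr u x).mpr hyadj
              have hKd : Disjoint ({a, b, y} : Finset V) S2 := by
                rw [disjoint_left]
                intro x hx hx2
                simp only [mem_insert, mem_singleton] at hx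
                rcases hx with rfl | rfl | rfl
                · exact haS2 hx2
                · exact hbS2 hx2
                · have h1 := hS1deg x hy1; have h2 := hS2deg x hx2; omega
              have hKcard : ({a, b, y} : Finset V).card = 3 := by
                rw [card_insert_of_notMem, card_insert_of_notMem
                  (by simp [Ne.symm (hbTne y (hS1T hy1))]), card_singleton]
                simp only [mem_insert, mem_singleton]
                push_neg
                exact ⟨hab, Ne.symm (haTne y (hS1T hy1))⟩
              have hub := nbr_ub G hKsub hKd
              have hdu := hS1deg u hu
              omega
            have huppera : (G.neighborFinset a ∩ S2).card ≤ 1 := by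
              have hKsub : insert b S1 ⊆ G.neighborFinset a := by
                intro x hx
                rcases mem_insert.mp hx with rfl | hx1
                · exact (hmemnbr a x).mpr hada
                · exact hS1a hx1
              have hKd : Disjoint (insert b S1) S2 := by
                rw [disjoint_left]
                intro x hx hx2
                rcases mem_insert.mp hx with rfl | hx1
                · exact hbS2 hx2
                · have h1 := hS1deg x hx1; have h2 := hS2deg x hx2; omega
              have hKcard : (insert b S1).card = 3 := by
                rw [card_insert_of_notMem hbS1, hk]
              have hub := nbr_ub G hKsub hKd
              have hda4 : G.degree a ≤ 4 := by omega
              omega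
            have hE1 : 8 ≤ ∑ w ∈ S2, (G.neighborFinset w ∩ (insert a S1)).card := by
              calc 8 = ∑ _w ∈ S2, 2 := by simp [Finset.sum_const, hS2card4]
                _ ≤ _ := Finset.sum_le_sum hlowerw
            have hE2 : ∑ t ∈ insert a S1, (G.neighborFinset t ∩ S2).card ≤ 5 := by
              rw [Finset.sum_insert haS1]
              have h4 : ∑ u ∈ S1, (G.neighborFinset u ∩ S2).card ≤ 4 := by
                calc ∑ u ∈ S1, (G.neighborFinset u ∩ S2).card
                    ≤ ∑ _u ∈ S1, 2 := Finset.sum_le_sum hupperu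
                  _ = 4 := by simp [Finset.sum_const, hk]
              omega
            rw [dc G (insert a S1) S2] at hE2
            omega
      · -- k = 3
        have hS2card3 : S2.card = 3 := by omega
        have hm45 : m = 4 ∨ m = 5 := by omega
        rcases hm45 with hmv | hmv
        · -- m = 4
          have hda3 : G.degree a = 3 := by omega
          have hnbra : G.neighborFinset a = S1 :=
            (eq_of_subset_of_card_le hS1a
              (by rw [G.card_neighborFinset_eq_degree, hda3, hk])).symm
          have hnadj : ∀ v : V, v ∉ S1 → ¬ G.Adj v a := by
            intro v hv hadj
            have hmem : v ∈ G.neighborFinset a := (hmemnbr a v).mpr hadj.symm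
            rw [hnbra] at hmem
            exact hv hmem
          have hM56 : M = 5 ∨ M = 6 := by omega
          rcases hM56 with hMv | hMv
          · -- (3,4,5)
            have hdb6 : 6 ≤ G.degree b := by omega
            have hbadjS1 : ∀ u ∈ S1, G.Adj u b := by
              have hsub : G.neighborFinset b ⊆ S1 ∪ S2 := by
                intro v hv
                have hadj := (hmemnbr b v).mp hv
                rcases huniv v with h1 | h1 | rfl | rfl
                · exact mem_union_left _ h1
                · exact mem_union_right _ h1
                · exact absurd hadj (hnadj b hbS1)
                · exact absurd rfl (G.ne_of_adj hadj)
              have hlb3 := nbr_lb G (show G.neighborFinset b ⊆ S1 ∪ S2 from hsub)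
              have hint : (G.neighborFinset b ∩ S1).card = 3 := by
                have hle := card_le_card
                  (show G.neighborFinset b ∩ S1 ⊆ S1 from inter_subset_right)
                rw [hk] at hle
                rw [hS2card3] at hlb3
                omega
              have hSeq : G.neighborFinset b ∩ S1 = S1 :=
                eq_of_subset_of_card_le inter_subset_right (by rw [hint, hk])
              intro u hu
              have hmem2 : u ∈ G.neighborFinset b ∩ S1 := by rw [hSeq]; exact hu
              exact ((hmemnbr b u).mp (mem_inter.mp hmem2).1).symm
            have hupperu : ∀ u ∈ S1, (G.neighborFinset u ∩ S2).card ≤ 1 := by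
              intro u hu
              obtain ⟨y, hy1, hyne, hyadj⟩ := hpart1 u hu
              have hKsub : ({a, b, y} : Finset V) ⊆ G.neighborFinset u := by
                intro x hx
                simp only [mem_insert, mem_singleton] at hx
                rcases hx with rfl | rfl | rfl
                · exact (hmemnbr u x).mpr (hminadjA u (hS1T hu) (hS1deg u hu))
                · exact (hmemnbr u x).mpr (hbadjS1 u hu)
                · exact (hmemnbr u x).mpr hyadj
              have hKd : Disjoint ({a, b, y} : Finset V) S2 := by
                rw [disjoint_left]
                intro x hx hx2
                simp only [mem_insert, mem_singleton] at hx
                rcases hx with rfl | rfl | rfl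
                · exact haS2 hx2
                · exact hbS2 hx2
                · have h1 := hS1deg x hy1; have h2 := hS2deg x hx2; omega
              have hKcard : ({a, b, y} : Finset V).card = 3 := by
                rw [card_insert_of_notMem, card_insert_of_notMem
                  (by simp [Ne.symm (hbTne y (hS1T hy1))]), card_singleton]
                simp only [mem_insert, mem_singleton]
                push_neg
                exact ⟨hab, Ne.symm (haTne y (hS1T hy1))⟩
              have hub := nbr_ub G hKsub hKd
              have hdu := hS1deg u hu
              omega
            have hlowerw : ∀ w ∈ S2, 2 ≤ (G.neighborFinset w ∩ S1).card := by
              intro w hw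
              have hwS1 : w ∉ S1 := fun hx => by
                have h1 := hS1deg w hx; have h2 := hS2deg w hw; omega
              have hsub : G.neighborFinset w ⊆ S1 ∪ (Finset.univ \ insert w (insert a S1)) := by
                intro v hv
                by_cases hvA : v ∈ S1
                · exact mem_union_left _ hvA
                · refine mem_union_right _ (mem_sdiff.mpr ⟨mem_univ _, fun hvm => ?_⟩)
                  rcases mem_insert.mp hvm with hvw | hvm2
                  · exact G.ne_of_adj ((hmemnbr w v).mp hv) hvw.symm
                  rcases mem_insert.mp hvm2 with hva | hvm3
                  · exact hnadj w hwS1 (hva ▸ ((hmemnbr w v).mp hv))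
                  · exact hvA hvm3
              have hcR : (Finset.univ \ insert w (insert a S1)).card = 3 := by
                rw [card_sdiff_of_subset (Finset.subset_univ _), hcard8, card_insert_of_notMem,
                  card_insert_of_notMem haS1, hk]
                simp only [mem_insert]
                push_neg
                exact ⟨haTne w (hS2T hw), hwS1⟩
              have := nbr_lb G hsub
              rw [hcR, hS2deg w hw, hMv] at this
              omega
            have hE1 : 6 ≤ ∑ w ∈ S2, (G.neighborFinset w ∩ S1).card := by
              calc 6 = ∑ _w ∈ S2, 2 := by simp [Finset.sum_const, hS2card3]
                _ ≤ _ := Finset.sum_le_sum hlowerw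
            have hE2 : ∑ u ∈ S1, (G.neighborFinset u ∩ S2).card ≤ 3 := by
              calc ∑ u ∈ S1, (G.neighborFinset u ∩ S2).card
                  ≤ ∑ _u ∈ S1, 1 := Finset.sum_le_sum hupperu
                _ = 3 := by simp [Finset.sum_const, hk]
            rw [← dc G S1 S2] at hE1
            omega
          · -- (3,4,6)
            obtain ⟨y, hy1, hyne, hyadj⟩ := hpart1 u0 (mem_filter.mpr ⟨hu0T, hm.symm⟩)
            have hu0S1 : u0 ∈ S1 := mem_filter.mpr ⟨hu0T, hm.symm⟩
            have hS2nbr : ∀ w ∈ S2, G.Adj w u0 := by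
              intro w hw
              have hwS1 : w ∉ S1 := fun hx => by
                have h1 := hS1deg w hx; have h2 := hS2deg w hw; omega
              have hwsub : G.neighborFinset w ⊆ Finset.univ \ {w, a} := by
                intro v hv
                have hadj := (hmemnbr w v).mp hv
                refine mem_sdiff.mpr ⟨mem_univ _, ?_⟩
                simp only [mem_insert, mem_singleton]
                push_neg
                exact ⟨(G.ne_of_adj hadj).symm, fun he => hnadj w hwS1 (he ▸ hadj)⟩
              have hcc : (Finset.univ \ {w, a}).card = 6 := by
                rw [card_sdiff_of_subset (Finset.subset_univ _), hcard8,
                  card_insert_of_notMem (by simp [haTne w (hS2T hw)]), card_singleton]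
              have hequ : G.neighborFinset w = Finset.univ \ {w, a} := by
                apply eq_of_subset_of_card_le hwsub
                rw [G.card_neighborFinset_eq_degree, hS2deg w hw, hcc, hMv]
              have hu0mem : u0 ∈ G.neighborFinset w := by
                rw [hequ]
                refine mem_sdiff.mpr ⟨mem_univ _, ?_⟩
                simp only [mem_insert, mem_singleton]
                push_neg
                constructor
                · intro he
                  have h1 := hS2deg w hw; rw [← he] at h1; omega
                · exact haTne u0 hu0T
              exact (hmemnbr w u0).mp hu0mem
            have hKsub : insert a (insert y S2) ⊆ G.neighborFinset u0 := by
              intro x hx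
              rcases mem_insert.mp hx with rfl | hx1
              · exact (hmemnbr u0 x).mpr (hminadjA u0 hu0T hm.symm)
              rcases mem_insert.mp hx1 with rfl | hx2
              · exact (hmemnbr u0 x).mpr hyadj
              · exact (hmemnbr u0 x).mpr (hS2nbr x hx2).symm
            have hKcard : (insert a (insert y S2)).card = 5 := by
              have hyS2 : y ∉ S2 := fun hx => by
                have h1 := hS1deg y hy1; have h2 := hS2deg y hx; omega
              rw [card_insert_of_notMem, card_insert_of_notMem hyS2, hS2card3]
              simp only [mem_insert]
              push_neg
              exact ⟨Ne.symm (haTne y (hS1T hy1)), haS2⟩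
            have hle := card_le_card hKsub
            rw [G.card_neighborFinset_eq_degree, hKcard] at hle
            omega
        · -- (3,5,6)
          have hMv : M = 6 := by omega
          have hdb7 : G.degree b = 7 := by have := hdeg7 b; omega
          have hada : G.Adj a b := (hfull b hdb7 a hab).symm
          have hnbra : G.neighborFinset a = insert b S1 := by
            have hsub : insert b S1 ⊆ G.neighborFinset a := by
              intro x hx
              rcases mem_insert.mp hx with rfl | hx1
              · exact (hmemnbr a x).mpr hada
              · exact hS1a hx1
            have hc : (insert b S1).card = 4 := by
              rw [card_insert_of_notMem hbS1, hk]
            refine (eq_of_subset_of_card_le hsub ?_).symm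
            rw [G.card_neighborFinset_eq_degree, hc]
            omega
          obtain ⟨y, hy1, hyne, hyadj⟩ := hpart1 u0 (mem_filter.mpr ⟨hu0T, hm.symm⟩)
          have hu0S1 : u0 ∈ S1 := mem_filter.mpr ⟨hu0T, hm.symm⟩
          have hS2nbr : ∀ w ∈ S2, G.Adj w u0 := by
            intro w hw
            have hwa : ¬ G.Adj w a := by
              intro hadj
              have hmem : w ∈ G.neighborFinset a := (hmemnbr a w).mpr hadj.symm
              rw [hnbra] at hmem
              rcases mem_insert.mp hmem with rfl | hx1
              · exact hbS2 hw
              · have h1 := hS1deg w hx1; have h2 := hS2deg w hw; omega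
            have hwsub : G.neighborFinset w ⊆ Finset.univ \ {w, a} := by
              intro v hv
              have hadj := (hmemnbr w v).mp hv
              refine mem_sdiff.mpr ⟨mem_univ _, ?_⟩
              simp only [mem_insert, mem_singleton]
              push_neg
              exact ⟨(G.ne_of_adj hadj).symm, fun he => hwa (he ▸ hadj)⟩
            have hcc : (Finset.univ \ {w, a}).card = 6 := by
              rw [card_sdiff_of_subset (Finset.subset_univ _), hcard8,
                card_insert_of_notMem (by simp [haTne w (hS2T hw)]), card_singleton]
            have hequ : G.neighborFinset w = Finset.univ \ {w, a} := by
              apply eq_of_subset_of_card_le hwsub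
              rw [G.card_neighborFinset_eq_degree, hS2deg w hw, hcc, hMv]
            have hu0mem : u0 ∈ G.neighborFinset w := by
              rw [hequ]
              refine mem_sdiff.mpr ⟨mem_univ _, ?_⟩
              simp only [mem_insert, mem_singleton]
              push_neg
              constructor
              · intro he
                have h1 := hS2deg w hw; rw [← he] at h1; omega
              · exact haTne u0 hu0T
            exact (hmemnbr w u0).mp hu0mem
          have hKsub : insert a (insert b (insert y S2)) ⊆ G.neighborFinset u0 := by
            intro x hx
            rcases mem_insert.mp hx with rfl | hx1
            · exact (hmemnbr u0 x).mpr (hminadjA u0 hu0T hm.symm)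
            rcases mem_insert.mp hx1 with rfl | hx2
            · exact (hmemnbr u0 x).mpr (hfull x hdb7 u0 (hbTne u0 hu0T)).symm
            rcases mem_insert.mp hx2 with rfl | hx3
            · exact (hmemnbr u0 x).mpr hyadj
            · exact (hmemnbr u0 x).mpr (hS2nbr x hx3).symm
          have hKcard : (insert a (insert b (insert y S2))).card = 6 := by
            have hyS2 : y ∉ S2 := fun hx => by
              have h1 := hS1deg y hy1; have h2 := hS2deg y hx; omega
            rw [card_insert_of_notMem, card_insert_of_notMem, card_insert_of_notMem hyS2,
              hS2card3]
            · simp only [mem_insert]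
              push_neg
              exact ⟨Ne.symm (hbTne y (hS1T hy1)), hbS2⟩
            · simp only [mem_insert]
              push_neg
              exact ⟨hab, Ne.symm (haTne y (hS1T hy1)), haS2⟩
          have hle := card_le_card hKsub
          rw [G.card_neighborFinset_eq_degree, hKcard] at hle
          omega
      · -- k = 4
        have hmv : m = 5 := by omega
        have hMv : M = 6 := by omega
        have hda4 : G.degree a = 4 := by omega
        have hdb7 : G.degree b = 7 := by have := hdeg7 b; omega
        have hnbra : G.neighborFinset a = S1 :=
          (eq_of_subset_of_card_le hS1a
            (by rw [G.card_neighborFinset_eq_degree, hda4, hk])).symm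
        have hbmem : b ∈ G.neighborFinset a := (hmemnbr a b).mpr (hfull b hdb7 a hab).symm
        rw [hnbra] at hbmem
        exact hbS1 hbmem
end
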